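/- arXiv:math/0106125 — 5 statements merged into one kernel-verified Lean document; each statement's English description precedes it below -/
import Mathlib

section
/- Let q be an invertible element of a commutative ring and let t be an element of an associative algebra (with t nilpotent or in a power-series setting so that the inverses exist). Then the product of the inverses (1-t)^{-1}(1-qt)^{-1}\cdots(1-q^{N-1}t)^{-1} equals the sum over k \geq 0 of \binom{N+k-1}{k}_q t^k, where \binom{a}{b}_q denotes the Gaussian (q-)binomial coefficient. -/
/-
Write `F_N := ∑_k C_q(N+k-1, k) t^k`. Coefficientwise, the q-Pascal recurrence is exactly
`(1 - t) F_{N+1}(t) = F_N(q t)`. Since replacing `t` by `q t` turns the product of the first `N`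
factors `(1 - q^j t)⁻¹` into the product of the factors with `1 ≤ j ≤ N`, induction on `N` gives
the identity, starting from `F_0 = 1`.
-/

/-- The Gaussian (q-)binomial coefficient, defined by the q-Pascal recurrence
`C_q(n+1, k+1) = C_q(n, k) + q^(k+1) * C_q(n, k+1)`.  For `0 ≤ b ≤ a` it equals
`[a]_q! / ([b]_q! [a-b]_q!)` and it vanishes for `b > a`. -/
def qChoose {R : Type*} [CommRing R] (q : R) : ℕ → ℕ → R
  | _, 0 => 1
  | 0, _ + 1 => 0
  | n + 1, k + 1 => qChoose q n k + q ^ (k + 1) * qChoose q n (k + 1)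

open PowerSeries

section qChoose

variable {R : Type*} [CommRing R] (q : R)

@[simp]
lemma qChoose_zero_right (n : ℕ) : qChoose q n 0 = 1 := by
  cases n <;> rfl

lemma qChoose_succ_succ (n k : ℕ) :
    qChoose q (n + 1) (k + 1) = qChoose q n k + q ^ (k + 1) * qChoose q n (k + 1) :=
  rfl

lemma qChoose_eq_zero_of_lt : ∀ {n k : ℕ}, n < k → qChoose q n k = 0
  | 0, _ + 1, _ => rfl
  | n + 1, k + 1, h => by
    rw [qChoose_succ_succ, qChoose_eq_zero_of_lt (by omega), qChoose_eq_zero_of_lt (by omega)]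
    ring

end qChoose

lemma map_ringInverse {M N F : Type*} [MonoidWithZero M] [MonoidWithZero N] [FunLike F M N]
    [MonoidHomClass F M N] (f : F) {x : M} (hx : IsUnit x) :
    f (Ring.inverse x) = Ring.inverse (f x) := by
  rw [← one_mul (Ring.inverse (f x)), Ring.eq_mul_inverse_iff_mul_eq _ _ _ (hx.map f), ← map_mul,
    Ring.inverse_mul_cancel _ hx, map_one]

section qBinomialSeries

variable {R : Type*} [CommRing R]

lemma isUnit_one_sub_C_mul_X (a : R) : IsUnit (1 - C a * X) := by
  simp [isUnit_iff_constantCoeff]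

lemma rescale_C (a b : R) : rescale a (C b) = C b := by
  ext (_ | n) <;> simp [coeff_C]

lemma rescale_one_sub_C_mul_X (a b : R) : rescale a (1 - C b * X) = 1 - C (b * a) * X := by
  rw [map_sub, map_one, map_mul, rescale_C, rescale_X, ← mul_assoc, ← map_mul]

/-- At `N = 0` the truncated subtraction `N + k - 1` is harmless: `C_q(k-1, k) = 0` for `k ≥ 1`. -/
noncomputable def qBinomialSeries (q : R) (N : ℕ) : R⟦X⟧ :=
  mk fun k => qChoose q (N + k - 1) k

lemma qBinomialSeries_zero (q : R) : qBinomialSeries q 0 = 1 := by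
  ext (_ | k)
  · simp [qBinomialSeries]
  · simp [qBinomialSeries, coeff_one, qChoose_eq_zero_of_lt q (Nat.lt_succ_self k)]

lemma one_sub_X_mul_qBinomialSeries_succ (q : R) (N : ℕ) :
    (1 - X) * qBinomialSeries q (N + 1) = rescale q (qBinomialSeries q N) := by
  ext (_ | k)
  · simp [qBinomialSeries]
  · rw [sub_mul, one_mul, map_sub, coeff_succ_X_mul, qBinomialSeries, qBinomialSeries,
      rescale_mk, coeff_mk, coeff_mk, coeff_mk,
      show N + 1 + (k + 1) - 1 = N + k + 1 by omega, show N + 1 + k - 1 = N + k by omega,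
      show N + (k + 1) - 1 = N + k by omega, qChoose_succ_succ]
    ring

end qBinomialSeries

/-- in `R[[t]]` (with `t = X`), the product of the inverses
`(1-t)⁻¹ (1-q t)⁻¹ ⋯ (1-q^(N-1) t)⁻¹` equals `∑_{k ≥ 0} C_q(N+k-1, k) t^k`. -/
theorem statement0 {R : Type*} [CommRing R] (q : Rˣ) (N : ℕ) :
    (∏ j ∈ Finset.range N,
        Ring.inverse (1 - PowerSeries.C ((q : R) ^ j) * PowerSeries.X)) =
      PowerSeries.mk fun k => qChoose (q : R) (N + k - 1) k := by
  change _ = qBinomialSeries (q : R) N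
  induction N with
  | zero => rw [Finset.prod_range_zero, qBinomialSeries_zero]
  | succ N ih =>
    have shifted : ∏ j ∈ Finset.range N, Ring.inverse (1 - C ((q : R) ^ (j + 1)) * X) =
        rescale (q : R) (qBinomialSeries q N) := by
      simp_rw [pow_succ, ← rescale_one_sub_C_mul_X,
        ← map_ringInverse (rescale (q : R)) (isUnit_one_sub_C_mul_X _), ← map_prod, ih]
    have hunit : IsUnit (1 - X : R⟦X⟧) := by simpa using isUnit_one_sub_C_mul_X (1 : R)
    rw [Finset.prod_range_succ', shifted, pow_zero, map_one, one_mul,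
      ← one_sub_X_mul_qBinomialSeries_succ, mul_comm (1 - X),
      Ring.mul_inverse_cancel_right _ _ hunit]
end

section
/- Let A be an associative algebra containing invertible elements a_{2,2}(\lambda), a_{2,2}(\mu) and elements a_{2,1}(\lambda), a_{2,1}(\mu) satisfying: [a_{2,1}(\lambda), a_{2,1}(\mu)] = 0, [a_{2,2}(\lambda), a_{2,2}(\mu)] = 0, and [a_{2,1}(\lambda), a_{2,2}(\mu)] = [a_{2,1}(\mu), a_{2,2}(\lambda)] = (1-q^{-1})(\mu a_{2,2}(\mu) a_{2,1}(\lambda) - \lambda a_{2,2}(\lambda) a_{2,1}(\mu)). Define \alpha(\lambda) = a_{2,2}(\lambda)^{-1} a_{2,1}(\lambda) and \alpha(\mu) = a_{2,2}(\mu)^{-1} a_{2,1}(\mu). Then [\alpha(\lambda), \alpha(\mu)] = (1-q^{-1})(\mu\,\alpha(\lambda) - \lambda\,\alpha(\mu))(\alpha(\lambda) - \alpha(\mu)). -/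
/-- given invertible `a₂₂(λ), a₂₂(μ)` and elements `a₂₁(λ), a₂₁(μ)` with
`[a₂₁(λ),a₂₁(μ)] = 0`, `[a₂₂(λ),a₂₂(μ)] = 0` and
`[a₂₁(λ),a₂₂(μ)] = [a₂₁(μ),a₂₂(λ)] = (1-q⁻¹)(μ a₂₂(μ)a₂₁(λ) - λ a₂₂(λ)a₂₁(μ))`,
the elements `α(ν) = a₂₂(ν)⁻¹ a₂₁(ν)` satisfy
`[α(λ), α(μ)] = (1-q⁻¹)(μ α(λ) - λ α(μ))(α(λ) - α(μ))`. -/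
theorem statement3 {R A : Type*} [CommRing R] [Ring A] [Algebra R A]
    (q lam mu : Rˣ) (a21l a21m : A) (a22l a22m : Aˣ)
    (h1 : a21l * a21m - a21m * a21l = 0)
    (h2 : (a22l : A) * (a22m : A) - (a22m : A) * (a22l : A) = 0)
    (h3 : a21l * (a22m : A) - (a22m : A) * a21l
        = a21m * (a22l : A) - (a22l : A) * a21m)
    (h4 : a21l * (a22m : A) - (a22m : A) * a21l
        = ((1 : R) - ((q⁻¹ : Rˣ) : R)) •
            ((mu : R) • ((a22m : A) * a21l) - (lam : R) • ((a22l : A) * a21m))) :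
    ∀ al am : A,
      al = ((a22l⁻¹ : Aˣ) : A) * a21l →
      am = ((a22m⁻¹ : Aˣ) : A) * a21m →
      al * am - am * al =
        ((1 : R) - ((q⁻¹ : Rˣ) : R)) • (((mu : R) • al - (lam : R) • am) * (al - am)) := by
  intro al am hal ham
  have hcommBC : Commute ((a22l : Aˣ) : A) ((a22m : Aˣ) : A) := sub_eq_zero.mp h2
  subst hal ham
  set c : R := (1 : R) - ((q⁻¹ : Rˣ) : R) with hc
  set E : A := c • ((mu : R) • ((a22m : A) * a21l) - (lam : R) • ((a22l : A) * a21m)) with hE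
  set B : A := (a22l : A)
  set C : A := (a22m : A)
  set Bi : A := ((a22l⁻¹ : Aˣ) : A)
  set Ci : A := ((a22m⁻¹ : Aˣ) : A)
  set X : A := a21l
  set Y : A := a21m
  have hBBi : B * Bi = 1 := a22l.mul_inv
  have hBiB : Bi * B = 1 := a22l.inv_mul
  have hCCi : C * Ci = 1 := a22m.mul_inv
  have hCiC : Ci * C = 1 := a22m.inv_mul
  have hXY : X * Y = Y * X := sub_eq_zero.mp h1
  have hCX : C * X = X * C - E := by rw [← h4]; abel
  have hBY : B * Y = Y * B - E := by rw [← h4, h3]; abel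
  have e3 : Ci * Bi = Bi * Ci := (hcommBC.units_inv_left.units_inv_right).eq.symm
  have e1 : X * Ci = Ci * X - Ci * E * Ci := by
    calc X * Ci = Ci * (C * (X * Ci)) := by rw [← mul_assoc, hCiC, one_mul]
      _ = Ci * (C * X) * Ci := by noncomm_ring
      _ = Ci * (X * C - E) * Ci := by rw [hCX]
      _ = Ci * X * (C * Ci) - Ci * E * Ci := by noncomm_ring
      _ = Ci * X - Ci * E * Ci := by rw [hCCi, mul_one]
  have e2 : Y * Bi = Bi * Y - Bi * E * Bi := by
    calc Y * Bi = Bi * (B * (Y * Bi)) := by rw [← mul_assoc, hBiB, one_mul]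
      _ = Bi * (B * Y) * Bi := by noncomm_ring
      _ = Bi * (Y * B - E) * Bi := by rw [hBY]
      _ = Bi * Y * (B * Bi) - Bi * E * Bi := by noncomm_ring
      _ = Bi * Y - Bi * E * Bi := by rw [hBBi, mul_one]
  have t1 : (Bi * X) * (Ci * Y) = Bi * Ci * (X * Y) - (Bi * Ci * E) * (Ci * Y) := by
    calc (Bi * X) * (Ci * Y) = Bi * (X * Ci) * Y := by noncomm_ring
      _ = Bi * (Ci * X - Ci * E * Ci) * Y := by rw [e1]
      _ = Bi * Ci * (X * Y) - (Bi * Ci * E) * (Ci * Y) := by noncomm_ring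
  have t2 : (Ci * Y) * (Bi * X) = Bi * Ci * (X * Y) - (Bi * Ci * E) * (Bi * X) := by
    calc (Ci * Y) * (Bi * X) = Ci * (Y * Bi) * X := by noncomm_ring
      _ = Ci * (Bi * Y - Bi * E * Bi) * X := by rw [e2]
      _ = (Ci * Bi) * (Y * X) - (Ci * Bi) * (E * (Bi * X)) := by noncomm_ring
      _ = (Bi * Ci) * (X * Y) - (Bi * Ci) * (E * (Bi * X)) := by rw [e3, hXY]
      _ = Bi * Ci * (X * Y) - (Bi * Ci * E) * (Bi * X) := by noncomm_ring
  have k1 : Bi * Ci * (C * X) = Bi * X := by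
    rw [mul_assoc, ← mul_assoc Ci, hCiC, one_mul]
  have k2 : Bi * Ci * (B * Y) = Ci * Y := by
    rw [← e3, mul_assoc, ← mul_assoc Bi, hBiB, one_mul]
  have hKey : Bi * Ci * E = c • ((mu : R) • (Bi * X) - (lam : R) • (Ci * Y)) := by
    rw [hE, mul_smul_comm, mul_sub, mul_smul_comm, mul_smul_comm, k1, k2]
  calc (Bi * X) * (Ci * Y) - (Ci * Y) * (Bi * X)
      = (Bi * Ci * E) * (Bi * X - Ci * Y) := by rw [t1, t2]; noncomm_ring
    _ = c • (((mu : R) • (Bi * X) - (lam : R) • (Ci * Y)) * (Bi * X - Ci * Y)) := by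
        rw [hKey, smul_mul_assoc]
end

section
/- Let n \geq 1 and let x_1, y_1, \ldots, x_n, y_n generate the algebra A over \mathbb{C}[q,q^{-1}] with relations x_k x_l = q x_l x_k, y_k y_l = q y_l y_k, y_k x_l = q^{-1} x_l y_k for k < l, and x_k y_l = q^{-1} y_l x_k for k \leq l. Then \Sigma_+ = \sum_{i=1}^n x_i and \Sigma_- = \sum_{i=1}^n y_i satisfy the quantum Serre relations of \widehat{\mathfrak{sl}}_2: \Sigma_{\pm}^3 \Sigma_{\mp} - (q+1+q^{-1})(\Sigma_{\pm}^2 \Sigma_{\mp} \Sigma_{\pm} - \Sigma_{\pm} \Sigma_{\mp} \Sigma_{\pm}^2) - \Sigma_{\mp} \Sigma_{\pm}^3 = 0. -/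
/-!
With `ad_c(e)(f) = e f - c f e`, the Serre element of `Σ₊, Σ₋` is
`ad_1(Σ₊) ad_q(Σ₊) ad_{q⁻¹}(Σ₊) Σ₋`, which is linear in `Σ₋`; so fix one summand `f = y_d`.
Splitting `Σ₊ = p + r` with `p = ∑_{k ≤ d} x_k` and `r = ∑_{k > d} x_k` gives
`p f = q⁻¹ f p`, `r f = q f r` and `p r = q r p`, and then the three twisted commutators
collapse: `ad_{q⁻¹}(p + r) f = (q - q⁻¹) f r`, `ad_q(p + r)(f r) = (1 - q) f r p`, and
`f r p` commutes with `p + r`. The other relation is the same argument with `x` and `y`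
exchanged, splitting `Σ₋` at `k < d` against `f = x_d`.
-/
open LaurentPolynomial

section QCommute

variable {R A : Type*} [CommRing R] [Ring A] [Algebra R A]

def QCommute (c : R) (a b : A) : Prop := a * b = c • (b * a)

def qAd (c : R) (a b : A) : A := a * b - c • (b * a)

def qSerre (c : R) (e f : A) : A :=
  e ^ 3 * f - c • (e ^ 2 * f * e - e * f * e ^ 2) - f * e ^ 3

theorem QCommute.symm {c c' : R} {a b : A} (h : QCommute c a b) (hc : c' * c = 1) :
    QCommute c' b a := by
  rw [QCommute, h, smul_smul, hc, one_smul]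

theorem QCommute.sum_left {ι : Type*} {c : R} {s : Finset ι} {a : ι → A} {b : A}
    (h : ∀ k ∈ s, QCommute c (a k) b) : QCommute c (∑ k ∈ s, a k) b := by
  rw [QCommute, Finset.sum_mul, Finset.mul_sum, Finset.smul_sum]
  exact Finset.sum_congr rfl h

theorem QCommute.sum_right {ι : Type*} {c : R} {s : Finset ι} {a : A} {b : ι → A}
    (h : ∀ l ∈ s, QCommute c a (b l)) : QCommute c a (∑ l ∈ s, b l) := by
  rw [QCommute, Finset.sum_mul, Finset.mul_sum, Finset.smul_sum]
  exact Finset.sum_congr rfl h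

theorem qAd_smul_right (c k : R) (a b : A) : qAd c a (k • b) = k • qAd c a b := by
  simp only [qAd, mul_smul_comm, smul_mul_assoc, smul_sub, smul_comm c k]

theorem qSerre_eq_qAd {q q' : R} (hq : q * q' = 1) (e f : A) :
    qSerre (q + 1 + q') e f = qAd (1 : R) e (qAd q e (qAd q' e f)) := by
  simp only [qSerre, qAd, pow_succ, pow_zero, one_mul, mul_sub, sub_mul, mul_smul_comm,
    smul_mul_assoc, mul_assoc]
  linear_combination (norm := module) hq • (f * (e * (e * e)) - e * (f * (e * e)))

theorem qSerre_add_eq_zero {q q' : R} (hq : q * q' = 1) {p r f : A}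
    (hpr : QCommute q p r) (hpf : QCommute q' p f) (hrf : QCommute q r f) :
    qSerre (q + 1 + q') (p + r) f = 0 := by
  have hpfr : p * (f * r) = f * (r * p) := by
    rw [← mul_assoc, hpf, smul_mul_assoc, mul_assoc, hpr, mul_smul_comm, smul_smul,
      mul_comm, hq, one_smul]
  have h₁ : qAd q' (p + r) f = (q - q') • (f * r) := by
    rw [qAd, add_mul, mul_add, hpf, hrf]; module
  have h₂ : qAd q (p + r) (f * r) = (1 - q) • (f * (r * p)) := by
    simp only [qAd, add_mul, mul_add, mul_assoc, hpfr]
    rw [← mul_assoc r, hrf, smul_mul_assoc, mul_assoc]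
    module
  have h₃ : qAd (1 : R) (p + r) (f * (r * p)) = 0 := by
    simp only [qAd, add_mul, mul_add, mul_assoc, one_smul]
    have : p * (f * (r * p)) = f * (r * (p * p)) := by
      simpa only [mul_assoc] using congrArg (· * p) hpfr
    rw [this, ← mul_assoc r f, hrf, hpr, smul_mul_assoc, mul_smul_comm, mul_smul_comm, mul_assoc]
    module
  rw [qSerre_eq_qAd hq, h₁, qAd_smul_right, h₂, qAd_smul_right, qAd_smul_right, h₃,
    smul_zero, smul_zero]

theorem qSerre_sum_right (c : R) (e : A) {ι : Type*} (s : Finset ι) (f : ι → A) :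
    qSerre c e (∑ i ∈ s, f i) = ∑ i ∈ s, qSerre c e (f i) := by
  simp only [qSerre, Finset.mul_sum, Finset.sum_mul, ← Finset.sum_sub_distrib, Finset.smul_sum]

theorem qSerre_sum_eq_zero {q q' : R} (hq : q * q' = 1) {ι : Type*} [Fintype ι]
    [DecidableEq ι] (e f : ι → A) (s : ι → Finset ι)
    (hee : ∀ d, ∀ k ∈ s d, ∀ l ∉ s d, QCommute q (e k) (e l))
    (hef_mem : ∀ d, ∀ k ∈ s d, QCommute q' (e k) (f d))
    (hef_notMem : ∀ d, ∀ k ∉ s d, QCommute q (e k) (f d)) :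
    qSerre (q + 1 + q') (∑ i, e i) (∑ i, f i) = 0 := by
  rw [qSerre_sum_right]
  refine Finset.sum_eq_zero fun d _ => ?_
  rw [← Finset.sum_add_sum_compl (s d)]
  refine qSerre_add_eq_zero hq ?_ ?_ ?_
  · exact .sum_left fun k hk => .sum_right fun l hl => hee d k hk l (Finset.mem_compl.mp hl)
  · exact .sum_left (hef_mem d)
  · exact .sum_left fun k hk => hef_notMem d k (Finset.mem_compl.mp hk)

end QCommute

/-- in the algebra over `ℂ[q,q⁻¹]` generated by `x₁,y₁,…,x_n,y_n` with
the discrete sine-Gordon relations, the finite screening charges `Σ₊ = ∑ x_i` and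
`Σ₋ = ∑ y_i` satisfy the quantum Serre relations of `\widehat{sl}₂`. -/
theorem statement10 {A : Type*} [Ring A] [Algebra (LaurentPolynomial ℂ) A]
    (n : ℕ) (x y : Fin n → A)
    (hxx : ∀ k l : Fin n, k < l → x k * x l = (T 1 : LaurentPolynomial ℂ) • (x l * x k))
    (hyy : ∀ k l : Fin n, k < l → y k * y l = (T 1 : LaurentPolynomial ℂ) • (y l * y k))
    (hyx : ∀ k l : Fin n, k < l → y k * x l = (T (-1) : LaurentPolynomial ℂ) • (x l * y k))
    (hxy : ∀ k l : Fin n, k ≤ l → x k * y l = (T (-1) : LaurentPolynomial ℂ) • (y l * x k)) :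
    ∀ Sp Sm : A, Sp = ∑ i, x i → Sm = ∑ i, y i →
      (Sp ^ 3 * Sm - ((T 1 + 1 + T (-1) : LaurentPolynomial ℂ)) •
          (Sp ^ 2 * Sm * Sp - Sp * Sm * Sp ^ 2) - Sm * Sp ^ 3 = 0) ∧
      (Sm ^ 3 * Sp - ((T 1 + 1 + T (-1) : LaurentPolynomial ℂ)) •
          (Sm ^ 2 * Sp * Sm - Sm * Sp * Sm ^ 2) - Sp * Sm ^ 3 = 0) := by
  rintro _ _ rfl rfl
  have hq : (T 1 : LaurentPolynomial ℂ) * T (-1) = 1 := by rw [← T_add, add_neg_cancel, T_zero]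
  refine ⟨qSerre_sum_eq_zero hq x y Finset.Iic ?_ ?_ ?_,
    qSerre_sum_eq_zero hq y x Finset.Iio ?_ ?_ ?_⟩
  · intro d k hk l hl
    simp only [Finset.mem_Iic, not_le] at hk hl
    exact hxx k l (hk.trans_lt hl)
  · intro d k hk
    exact hxy k d (Finset.mem_Iic.mp hk)
  · intro d k hk
    exact QCommute.symm (hyx d k (not_le.mp (Finset.mem_Iic.not.mp hk))) hq
  · intro d k hk l hl
    simp only [Finset.mem_Iio, not_lt] at hk hl
    exact hyy k l (hk.trans_le hl)
  · intro d k hk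
    exact hyx k d (Finset.mem_Iio.mp hk)
  · intro d k hk
    exact QCommute.symm (hxy d k (not_lt.mp (Finset.mem_Iio.not.mp hk))) hq
end

section
/- For n=2 explicitly: if x_1, y_1, x_2, y_2 satisfy x_1 x_2 = q x_2 x_1, y_1 y_2 = q y_2 y_1, y_1 x_2 = q^{-1} x_2 y_1, x_1 y_1 = q^{-1} y_1 x_1, x_1 y_2 = q^{-1} y_2 x_1, x_2 y_2 = q^{-1} y_2 x_2 in an associative algebra over \mathbb{C}[q,q^{-1}], then S = x_1 + x_2 and R = y_1 + y_2 satisfy S^3 R - (q+1+q^{-1})(S^2 R S - S R S^2) - R S^3 = 0. -/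
open LaurentPolynomial

/-- explicit two-site case. If `x₁,y₁,x₂,y₂` satisfy the six listed
`q`-commutation relations, then `S = x₁ + x₂` and `R = y₁ + y₂` satisfy
`S³R - (q+1+q⁻¹)(S²RS - SRS²) - RS³ = 0`. -/
theorem statement11 {A : Type*} [Ring A] [Algebra (LaurentPolynomial ℂ) A]
    (x1 y1 x2 y2 : A)
    (h1 : x1 * x2 = (T 1 : LaurentPolynomial ℂ) • (x2 * x1))
    (h2 : y1 * y2 = (T 1 : LaurentPolynomial ℂ) • (y2 * y1))
    (h3 : y1 * x2 = (T (-1) : LaurentPolynomial ℂ) • (x2 * y1))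
    (h4 : x1 * y1 = (T (-1) : LaurentPolynomial ℂ) • (y1 * x1))
    (h5 : x1 * y2 = (T (-1) : LaurentPolynomial ℂ) • (y2 * x1))
    (h6 : x2 * y2 = (T (-1) : LaurentPolynomial ℂ) • (y2 * x2)) :
    ∀ S R : A, S = x1 + x2 → R = y1 + y2 →
      S ^ 3 * R - ((T 1 + 1 + T (-1) : LaurentPolynomial ℂ)) •
          (S ^ 2 * R * S - S * R * S ^ 2) - R * S ^ 3 = 0 := by
  have h1' : ∀ z : A, x1 * (x2 * z) = (T 1 : LaurentPolynomial ℂ) • (x2 * (x1 * z)) := by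
    intro z; rw [← mul_assoc, h1, smul_mul_assoc, mul_assoc]
  have h2' : ∀ z : A, y1 * (y2 * z) = (T 1 : LaurentPolynomial ℂ) • (y2 * (y1 * z)) := by
    intro z; rw [← mul_assoc, h2, smul_mul_assoc, mul_assoc]
  have h3' : ∀ z : A, y1 * (x2 * z) = (T (-1) : LaurentPolynomial ℂ) • (x2 * (y1 * z)) := by
    intro z; rw [← mul_assoc, h3, smul_mul_assoc, mul_assoc]
  have h4' : ∀ z : A, x1 * (y1 * z) = (T (-1) : LaurentPolynomial ℂ) • (y1 * (x1 * z)) := by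
    intro z; rw [← mul_assoc, h4, smul_mul_assoc, mul_assoc]
  have h5' : ∀ z : A, x1 * (y2 * z) = (T (-1) : LaurentPolynomial ℂ) • (y2 * (x1 * z)) := by
    intro z; rw [← mul_assoc, h5, smul_mul_assoc, mul_assoc]
  have h6' : ∀ z : A, x2 * (y2 * z) = (T (-1) : LaurentPolynomial ℂ) • (y2 * (x2 * z)) := by
    intro z; rw [← mul_assoc, h6, smul_mul_assoc, mul_assoc]
  rintro S R rfl rfl
  have hpow : ∀ a : A, a ^ 3 = a * (a * a) := fun a => by rw [pow_succ, pow_two, mul_assoc]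
  have hpow2 : ∀ a : A, a ^ 2 = a * a := fun a => by rw [pow_two]
  simp only [hpow, hpow2, mul_add, add_mul, smul_add, add_smul, smul_sub, sub_mul, mul_sub,
    mul_assoc, smul_mul_assoc, mul_smul_comm, smul_smul,
    h1, h2, h3, h4, h5, h6, h1', h2', h3', h4', h5', h6',
    ← T_add, one_smul, one_mul, mul_one, T_zero, Int.reduceNeg, Int.reduceAdd]
  module
end

section
/- In the algebra U_{\lambda,\mu} with q-commuting elements as above, for every n \in \mathbb{N} there exist coefficients c_{\alpha,\beta} in the base ring (depending on \lambda^{-1}, \mu^{-1}, q) such that u_\mu (u_\lambda)^n = \sum_{\alpha+\beta = n+1} c_{\alpha,\beta} (u_\lambda)^\alpha (u_\mu)^\beta, and these are given by c_{\alpha,0} = (q^{\alpha-1}-1)\lambda^{-1} / (q^{\alpha-1}\lambda^{-1} - \mu^{-1}) and, for \beta \neq 0, c_{\alpha,\beta} = q^{\alpha-1} \left[\prod_{j=\alpha+1}^{\alpha+\beta-1}(q^j - 1)\right] \frac{(\lambda^{-1}-\mu^{-1})(\lambda^{-1}-q\mu^{-1})\mu^{-(\beta-1)}}{\prod_{j=\alpha-1}^{\alpha+\beta-1}(q^j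 \lambda^{-1}-\mu^{-1})}. -/
/-!
With `A = (q-1)l/(ql-m)`, `B = (q-1)m/(ql-m)`, `C = (l-qm)/(ql-m)` the relation reads
`u_μ u_λ = A u_λ² + C u_λ u_μ + B u_μ²`, so
`u_μ u_λ^(n+1) = A u_λ^(n+2) + C u_λ (u_μ u_λ^n) + B u_μ (u_μ u_λ^n)`. Expanding
`u_μ u_λ^n`, and then each `u_μ u_λ^j` with `j ≤ n`, by induction leaves a single unordered
term, `B c_{n+1,0} u_μ u_λ^(n+1)`; moving it to the left shows that
`(1 - B c_{n+1,0}) u_μ u_λ^(n+1)` is an ordered combination. The closed-form coefficients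
satisfy the resulting recursion: since
`c_{α,β+1} = (q^(α+β) - 1)m / (q^(α+β)l - m) · c_{α,β}` for `β ≥ 1`, the cases `β ≥ 2`
reduce to the recursion one degree lower, and what is left are identities between rational
functions of `v = q^n`.
-/

namespace ULambdaMu

open Finset

lemma prod_Icc_add_one_right {M : Type*} [CommMonoid M] (f : ℤ → M) {a b : ℤ}
    (h : a ≤ b + 1) :
    ∏ j ∈ Icc a (b + 1), f j = (∏ j ∈ Icc a b, f j) * f (b + 1) := by
  rw [← insert_Icc_right_eq_Icc_add_one h, prod_insert (by simp), mul_comm]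

section Reordering

variable {K : Type*} [Field K] {A : Type*} [Ring A] [Algebra K A]

def orderedSum (c : ℕ → ℕ → K) (ul um : A) (n : ℕ) : A :=
  ∑ j ∈ range (n + 2), c j (n + 1 - j) • (ul ^ j * um ^ (n + 1 - j))

-- For `α = 0` the truncated `α - 1 = 0` is still the right lower bound.
def nestedCoeff (c : ℕ → ℕ → K) (n α : ℕ) : K :=
  ∑ j ∈ Icc (α - 1) n, c j (n + 1 - j) * c α (j + 1 - α)

variable (c : ℕ → ℕ → K) (ul um : A)

lemma ul_mul_orderedSum (n : ℕ) :
    ul * orderedSum c ul um n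
      = ∑ α ∈ range (n + 3),
          (if 1 ≤ α then c (α - 1) (n + 2 - α) else 0) • (ul ^ α * um ^ (n + 2 - α)) := by
  rw [orderedSum, mul_sum, sum_range_succ' _ (n + 2), if_neg (by omega), zero_smul, add_zero]
  refine sum_congr rfl fun j hj => ?_
  rw [if_pos (Nat.le_add_left 1 j), Nat.add_sub_cancel, mul_smul_comm, ← mul_assoc, ← pow_succ',
    show n + 2 - (j + 1) = n + 1 - j by omega]

lemma sum_smul_orderedSum_mul (n : ℕ) :
    ∑ j ∈ range (n + 1), c j (n + 1 - j) • (orderedSum c ul um j * um ^ (n + 1 - j))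
      = ∑ α ∈ range (n + 3), nestedCoeff c n α • (ul ^ α * um ^ (n + 2 - α)) := by
  have hexpand : ∀ j ∈ range (n + 1),
      c j (n + 1 - j) • (orderedSum c ul um j * um ^ (n + 1 - j))
        = ∑ α ∈ range (j + 2),
            (c j (n + 1 - j) * c α (j + 1 - α)) • (ul ^ α * um ^ (n + 2 - α)) := by
    intro j hj
    rw [orderedSum, sum_mul, smul_sum]
    refine sum_congr rfl fun α hα => ?_
    have hαj : α ≤ j + 1 := Nat.lt_succ_iff.mp (mem_range.mp hα)
    rw [smul_mul_assoc, smul_smul, mul_assoc, ← pow_add,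
      show j + 1 - α + (n + 1 - j) = n + 2 - α by have := mem_range.mp hj; omega]
  rw [sum_congr rfl hexpand, sum_comm' (t' := range (n + 3)) (s' := fun α => Icc (α - 1) n)]
  · simp only [nestedCoeff, sum_smul]
  · intro j α
    simp only [mem_range, mem_Icc]
    omega

variable {c ul um} {a b d : K}

lemma smul_um_mul_pow_succ (hexch : um * ul = a • (ul * ul) + d • (ul * um) + b • (um * um))
    (n : ℕ) (ih : ∀ k ≤ n, um * ul ^ k = orderedSum c ul um k) :
    (1 - b * c (n + 1) 0) • (um * ul ^ (n + 1))
      = a • ul ^ (n + 2) + d • (ul * orderedSum c ul um n)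
        + b • ∑ j ∈ range (n + 1),
            c j (n + 1 - j) • (orderedSum c ul um j * um ^ (n + 1 - j)) := by
  have hexpand : um * ul ^ (n + 1)
      = a • ul ^ (n + 2) + d • (ul * orderedSum c ul um n)
        + b • (um * orderedSum c ul um n) := by
    rw [pow_succ', ← mul_assoc, hexch, ← ih n le_rfl]
    simp only [add_mul, smul_mul_assoc, mul_assoc, ← pow_succ']
  have hlast : um * orderedSum c ul um n
      = ∑ j ∈ range (n + 1), c j (n + 1 - j) • (orderedSum c ul um j * um ^ (n + 1 - j))
        + c (n + 1) 0 • (um * ul ^ (n + 1)) := by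
    rw [orderedSum, mul_sum, sum_range_succ, Nat.sub_self, pow_zero, mul_one, mul_smul_comm]
    congr 1
    refine sum_congr rfl fun j hj => ?_
    rw [mul_smul_comm, ← mul_assoc, ih j (Nat.lt_succ_iff.mp (mem_range.mp hj))]
  rw [sub_smul, one_smul, mul_smul]
  nth_rewrite 1 [hexpand]
  rw [hlast, smul_add]
  abel

theorem um_mul_pow_eq_orderedSum
    (hexch : um * ul = a • (ul * ul) + d • (ul * um) + b • (um * um))
    (h01 : c 0 1 = 1) (h10 : c 1 0 = 0) (hK : ∀ n, 1 - b * c (n + 1) 0 ≠ 0)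
    (hrec : ∀ n α, α ≤ n + 2 → (1 - b * c (n + 1) 0) * c α (n + 2 - α)
      = (if α = n + 2 then a else 0) + (if 1 ≤ α then d * c (α - 1) (n + 2 - α) else 0)
        + b * nestedCoeff c n α)
    (n : ℕ) : um * ul ^ n = orderedSum c ul um n := by
  induction n using Nat.strong_induction_on with
  | _ n ih =>
  cases n with
  | zero => simp [orderedSum, sum_range_succ, h01, h10]
  | succ n =>
    refine smul_right_injective A (hK n) ?_
    dsimp only
    rw [smul_um_mul_pow_succ hexch n fun k hk => ih k (by omega), ul_mul_orderedSum,
      sum_smul_orderedSum_mul]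
    conv_rhs => rw [orderedSum, smul_sum]
    have hterm : ∀ α ∈ range (n + 3),
        (1 - b * c (n + 1) 0) • c α (n + 1 + 1 - α) • (ul ^ α * um ^ (n + 1 + 1 - α))
          = (if α = n + 2 then a • (ul ^ α * um ^ (n + 2 - α)) else 0)
            + (d * if 1 ≤ α then c (α - 1) (n + 2 - α) else 0)
                • (ul ^ α * um ^ (n + 2 - α))
            + (b * nestedCoeff c n α) • (ul ^ α * um ^ (n + 2 - α)) := by
      intro α hα
      rw [smul_smul, hrec n α (Nat.lt_succ_iff.mp (mem_range.mp hα)), mul_ite, mul_zero,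
        add_smul, add_smul, ite_smul, zero_smul]
    rw [sum_congr rfl hterm, sum_add_distrib, sum_add_distrib, sum_ite_eq' _ _ _,
      if_pos (by simp), Nat.sub_self, pow_zero, mul_one, smul_sum, smul_sum]
    simp only [smul_smul]

end Reordering

section RationalIdentities

variable {K : Type*} [Field K] (q l m : K)

noncomputable def coeffAtZero (v : K) : K := (v - 1) * l / (v * l - m)

noncomputable def coeffAtOne (v : K) : K :=
  v * ((l - m) * (l - q * m)) / ((v * l - m) * (q * v * l - m))

noncomputable def coeffRatio (v : K) : K := (v - 1) * m / (v * l - m)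

variable {q l m} {v : K} (hql : q * l - m ≠ 0) (hv : v * l - m ≠ 0)
include hql hv

lemma one_sub_coeffRatio_mul_coeffAtZero :
    1 - coeffRatio l m q * coeffAtZero l m v
      = (l - m) * (q * v * l - m) / ((q * l - m) * (v * l - m)) := by
  rw [coeffRatio, coeffAtZero, div_mul_div_comm, one_sub_div (mul_ne_zero hql hv)]
  ring

variable (hqv : q * v * l - m ≠ 0)
include hqv

lemma coeffAtZero_identity :
    (1 - coeffRatio l m q * coeffAtZero l m v) * coeffAtZero l m (q * v)
      = coeffAtZero l m q + (l - q * m) / (q * l - m) * coeffAtZero l m v := by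
  rw [one_sub_coeffRatio_mul_coeffAtZero hql hv]
  simp only [coeffAtZero, div_mul_div_comm]
  rw [div_add_div _ _ hql (mul_ne_zero hql hv), div_eq_div_iff (by simp [*]) (by simp [*])]
  ring

variable (hqqv : q * (q * v) * l - m ≠ 0)
include hqqv

lemma coeffAtOne_identity :
    (1 - coeffRatio l m q * coeffAtZero l m (q * v)) * coeffAtOne q l m (q * v)
      = coeffAtOne q l m v
          * ((l - q * m) / (q * l - m) + coeffRatio l m q * coeffAtZero l m (q * v)) := by
  rw [one_sub_coeffRatio_mul_coeffAtZero hql hqv]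
  simp only [coeffAtOne, coeffAtZero, coeffRatio, div_mul_div_comm]
  rw [div_add_div _ _ hql (mul_ne_zero hql hqv), div_mul_div_comm,
    div_eq_div_iff (by simp [*]) (by simp [*])]
  ring

lemma coeffRatio_identity :
    (1 - coeffRatio l m q * coeffAtZero l m (q * v)) * coeffRatio l m (q * (q * v))
      = coeffRatio l m (q * v) * (1 - coeffRatio l m q * coeffAtZero l m v)
        + coeffRatio l m q * coeffAtOne q l m v := by
  rw [one_sub_coeffRatio_mul_coeffAtZero hql hqv, one_sub_coeffRatio_mul_coeffAtZero hql hv]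
  simp only [coeffAtOne, coeffRatio, div_mul_div_comm]
  rw [div_add_div _ _ (by simp [*]) (by simp [*]), div_eq_div_iff (by simp [*]) (by simp [*])]
  ring

end RationalIdentities

section ClosedForm

variable {K : Type*} [Field K] (q l m : K)

noncomputable def reorderCoeff (α β : ℕ) : K :=
  if β = 0 then (q ^ ((α : ℤ) - 1) - 1) * l / (q ^ ((α : ℤ) - 1) * l - m)
  else q ^ ((α : ℤ) - 1) *
      (∏ j ∈ Icc ((α : ℤ) + 1) ((α : ℤ) + (β : ℤ) - 1), (q ^ j - 1)) *
      ((l - m) * (l - q * m) * m ^ ((β : ℤ) - 1)) /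
      (∏ j ∈ Icc ((α : ℤ) - 1) ((α : ℤ) + (β : ℤ) - 1), (q ^ j * l - m))

lemma reorderCoeff_zero_right (α : ℕ) :
    reorderCoeff q l m α 0 = coeffAtZero l m (q ^ ((α : ℤ) - 1)) := by
  rw [reorderCoeff, if_pos rfl, coeffAtZero]

lemma reorderCoeff_one_right {q : K} (hq : q ≠ 0) (α : ℕ) :
    reorderCoeff q l m α 1 = coeffAtOne q l m (q ^ ((α : ℤ) - 1)) := by
  have hIcc : Icc ((α : ℤ) - 1) α = {(α : ℤ) - 1, (α : ℤ)} := by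
    ext j
    simp only [mem_Icc, mem_insert, mem_singleton]
    omega
  rw [reorderCoeff, if_neg one_ne_zero, coeffAtOne, Nat.cast_one, add_sub_cancel_right,
    Icc_eq_empty (by omega), hIcc, prod_pair (by omega), prod_empty, sub_self, zpow_zero,
    ← zpow_one_add₀ hq, add_sub_cancel]
  ring

lemma reorderCoeff_add_two_right (α β : ℕ) :
    reorderCoeff q l m α (β + 2)
      = coeffRatio l m (q ^ (α + β + 1)) * reorderCoeff q l m α (β + 1) := by
  have htop₂ : (α : ℤ) + ((β + 2 : ℕ) : ℤ) - 1 = ((α + β : ℕ) : ℤ) + 1 := by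
    push_cast; ring
  have htop₁ : (α : ℤ) + ((β + 1 : ℕ) : ℤ) - 1 = ((α + β : ℕ) : ℤ) := by
    push_cast; ring
  have hexp₂ : ((β + 2 : ℕ) : ℤ) - 1 = ((β + 1 : ℕ) : ℤ) := by push_cast; ring
  have hexp₁ : ((β + 1 : ℕ) : ℤ) - 1 = (β : ℤ) := by push_cast; ring
  have hpow : q ^ (((α + β : ℕ) : ℤ) + 1) = q ^ (α + β + 1) := by norm_cast
  rw [reorderCoeff, reorderCoeff, if_neg (by omega), if_neg (by omega), htop₂, htop₁, hexp₂,
    hexp₁, prod_Icc_add_one_right _ (by omega), prod_Icc_add_one_right _ (by omega), coeffRatio,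
    hpow, zpow_natCast, zpow_natCast, pow_succ m, div_mul_div_comm]
  congr 1 <;> ring

lemma reorderCoeff_succ_zero_right (n : ℕ) :
    reorderCoeff q l m (n + 1) 0 = coeffAtZero l m (q ^ n) := by
  rw [reorderCoeff_zero_right]
  push_cast
  rw [add_sub_cancel_right, zpow_natCast]

lemma reorderCoeff_succ_one_right {q : K} (hq : q ≠ 0) (n : ℕ) :
    reorderCoeff q l m (n + 1) 1 = coeffAtOne q l m (q ^ n) := by
  rw [reorderCoeff_one_right l m hq]
  push_cast
  rw [add_sub_cancel_right, zpow_natCast]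

lemma reorderCoeff_one_zero : reorderCoeff q l m 1 0 = 0 := by
  rw [reorderCoeff_succ_zero_right, coeffAtZero, pow_zero, sub_self, zero_mul, zero_div]

lemma nestedCoeff_reorderCoeff_succ (n α : ℕ) (hα : α ≤ n + 2) :
    nestedCoeff (reorderCoeff q l m) (n + 1) α
      = coeffRatio l m (q ^ (n + 1)) * nestedCoeff (reorderCoeff q l m) n α
        + reorderCoeff q l m (n + 1) 1 * reorderCoeff q l m α (n + 2 - α) := by
  rw [nestedCoeff, nestedCoeff, sum_Icc_succ_top (by omega), mul_sum, Nat.add_sub_cancel_left,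
    show n + 1 + 1 - α = n + 2 - α by omega]
  congr 1
  refine sum_congr rfl fun j hj => ?_
  have hjn : j ≤ n := (mem_Icc.mp hj).2
  have h := reorderCoeff_add_two_right q l m j (n - j)
  rw [show n - j + 2 = n + 1 + 1 - j by omega, show j + (n - j) + 1 = n + 1 by omega,
    show n - j + 1 = n + 1 - j by omega] at h
  rw [h, mul_assoc]

end ClosedForm

section Recursion

variable {K : Type*} [Field K] {q l m : K} (hq : q ≠ 0) (hden : ∀ j : ℤ, q ^ j * l - m ≠ 0)
include hden

lemma pow_mul_sub_ne_zero (n : ℕ) : q ^ n * l - m ≠ 0 := by simpa using hden n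

lemma mul_sub_ne_zero : q * l - m ≠ 0 := by simpa using hden 1

lemma one_sub_coeffRatio_mul_reorderCoeff_ne_zero (n : ℕ) :
    1 - coeffRatio l m q * reorderCoeff q l m (n + 1) 0 ≠ 0 := by
  have hqn : q * q ^ n * l - m ≠ 0 := by rw [← pow_succ']; exact pow_mul_sub_ne_zero hden _
  rw [reorderCoeff_succ_zero_right, one_sub_coeffRatio_mul_coeffAtZero (mul_sub_ne_zero hden)
    (pow_mul_sub_ne_zero hden n)]
  exact div_ne_zero (mul_ne_zero (by simpa using hden 0) hqn)
    (mul_ne_zero (mul_sub_ne_zero hden) (pow_mul_sub_ne_zero hden n))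

lemma reorderCoeff_recursion_top (n : ℕ) :
    (1 - coeffRatio l m q * reorderCoeff q l m (n + 1) 0) * reorderCoeff q l m (n + 2) 0
      = coeffAtZero l m q + (l - q * m) / (q * l - m) * reorderCoeff q l m (n + 1) 0 := by
  rw [reorderCoeff_succ_zero_right, reorderCoeff_succ_zero_right, pow_succ']
  refine coeffAtZero_identity (mul_sub_ne_zero hden) (pow_mul_sub_ne_zero hden n) ?_
  rw [← pow_succ']
  exact pow_mul_sub_ne_zero hden _

include hq

lemma reorderCoeff_zero_one : reorderCoeff q l m 0 1 = 1 := by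
  have hinv : q⁻¹ * (l - q * m) = q⁻¹ * l - m := by
    rw [mul_sub, ← mul_assoc, inv_mul_cancel₀ hq, one_mul]
  rw [reorderCoeff_one_right l m hq, coeffAtOne, Nat.cast_zero, zero_sub, zpow_neg_one,
    mul_inv_cancel₀ hq, one_mul,
    div_eq_one_iff_eq (mul_ne_zero (by simpa using hden (-1)) (by simpa using hden 0))]
  linear_combination (l - m) * hinv

lemma reorderCoeff_recursion_subtop (n : ℕ) :
    (1 - coeffRatio l m q * reorderCoeff q l m (n + 1) 0) * reorderCoeff q l m (n + 1) 1
      = reorderCoeff q l m n 1 * ((l - q * m) / (q * l - m)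
          + coeffRatio l m q * reorderCoeff q l m (n + 1) 0) := by
  have hv : q ^ (((n + 1 : ℕ) : ℤ) - 1) = q * q ^ ((n : ℤ) - 1) := by
    rw [← zpow_one_add₀ hq]
    push_cast
    ring_nf
  rw [reorderCoeff_one_right l m hq, reorderCoeff_one_right l m hq, reorderCoeff_zero_right, hv]
  refine coeffAtOne_identity (mul_sub_ne_zero hden) (hden _) ?_ ?_
  · rw [← zpow_one_add₀ hq]; exact hden _
  · rw [← zpow_one_add₀ hq, ← zpow_one_add₀ hq]; exact hden _

lemma coeffRatio_recursion (n : ℕ) :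
    (1 - coeffRatio l m q * reorderCoeff q l m (n + 2) 0) * coeffRatio l m (q ^ (n + 2))
      = coeffRatio l m (q ^ (n + 1)) * (1 - coeffRatio l m q * reorderCoeff q l m (n + 1) 0)
        + coeffRatio l m q * reorderCoeff q l m (n + 1) 1 := by
  rw [reorderCoeff_succ_zero_right, reorderCoeff_succ_zero_right,
    reorderCoeff_succ_one_right l m hq, pow_succ', pow_succ', pow_succ']
  refine coeffRatio_identity (mul_sub_ne_zero hden) (pow_mul_sub_ne_zero hden n) ?_ ?_
  · rw [← pow_succ']; exact pow_mul_sub_ne_zero hden _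
  · rw [← pow_succ', ← pow_succ']; exact pow_mul_sub_ne_zero hden _

lemma reorderCoeff_recursion_succ (k α : ℕ) (hα : α ≤ k + 1)
    (ih : (1 - coeffRatio l m q * reorderCoeff q l m (k + 1) 0) * reorderCoeff q l m α (k + 2 - α)
      = (if 1 ≤ α then (l - q * m) / (q * l - m) * reorderCoeff q l m (α - 1) (k + 2 - α)
          else 0)
        + coeffRatio l m q * nestedCoeff (reorderCoeff q l m) k α) :
    (1 - coeffRatio l m q * reorderCoeff q l m (k + 2) 0) * reorderCoeff q l m α (k + 3 - α)
      = (if 1 ≤ α then (l - q * m) / (q * l - m) * reorderCoeff q l m (α - 1) (k + 3 - α)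
          else 0)
        + coeffRatio l m q * nestedCoeff (reorderCoeff q l m) (k + 1) α := by
  have hc := reorderCoeff_add_two_right q l m α (k + 1 - α)
  rw [show k + 1 - α + 2 = k + 3 - α by omega, show α + (k + 1 - α) + 1 = k + 2 by omega,
    show k + 1 - α + 1 = k + 2 - α by omega] at hc
  rw [hc, nestedCoeff_reorderCoeff_succ q l m k α (by omega)]
  split_ifs at ih ⊢ with h1
  · have hc' := reorderCoeff_add_two_right q l m (α - 1) (k + 1 - α)
    rw [show k + 1 - α + 2 = k + 3 - α by omega, show α - 1 + (k + 1 - α) + 1 = k + 1 by omega,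
      show k + 1 - α + 1 = k + 2 - α by omega] at hc'
    rw [hc']
    linear_combination coeffRatio l m (q ^ (k + 1)) * ih
      + reorderCoeff q l m α (k + 2 - α) * coeffRatio_recursion hq hden k
  · linear_combination coeffRatio l m (q ^ (k + 1)) * ih
      + reorderCoeff q l m α (k + 2 - α) * coeffRatio_recursion hq hden k

lemma reorderCoeff_recursion (n α : ℕ) (hα : α ≤ n + 2) :
    (1 - coeffRatio l m q * reorderCoeff q l m (n + 1) 0) * reorderCoeff q l m α (n + 2 - α)
      = (if α = n + 2 then coeffAtZero l m q else 0)
        + (if 1 ≤ α then (l - q * m) / (q * l - m) * reorderCoeff q l m (α - 1) (n + 2 - α)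
            else 0)
        + coeffRatio l m q * nestedCoeff (reorderCoeff q l m) n α := by
  induction n using Nat.strong_induction_on generalizing α with
  | _ n ih =>
  rcases (by omega : α = n + 2 ∨ α = n + 1 ∨ α ≤ n) with rfl | rfl | hαn
  · have hnest : nestedCoeff (reorderCoeff q l m) n (n + 2) = 0 :=
      sum_eq_zero fun j hj => absurd (mem_Icc.mp hj) (by omega)
    rw [if_pos rfl, if_pos (by omega), hnest, Nat.sub_self, show n + 2 - 1 = n + 1 by omega,
      mul_zero, add_zero]
    exact reorderCoeff_recursion_top hden n
  · have hnest : nestedCoeff (reorderCoeff q l m) n (n + 1)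
        = reorderCoeff q l m n 1 * reorderCoeff q l m (n + 1) 0 := by
      rw [nestedCoeff, Nat.add_sub_cancel, Icc_self, sum_singleton, Nat.add_sub_cancel_left,
        Nat.sub_self]
    rw [if_neg (by omega), if_pos (by omega), hnest, Nat.add_sub_cancel,
      show n + 2 - (n + 1) = 1 by omega, zero_add]
    linear_combination reorderCoeff_recursion_subtop hq hden n
  rcases n with _ | k
  · obtain rfl : α = 0 := by omega
    have h02 := reorderCoeff_add_two_right q l m 0 0
    simp [nestedCoeff, h02, reorderCoeff_one_zero, reorderCoeff_zero_one hq hden]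
  have ihα := ih k (by omega) α (by omega)
  rw [if_neg (by omega), zero_add] at ihα ⊢
  exact reorderCoeff_recursion_succ hq hden k α (by omega) ihα

end Recursion

lemma um_mul_ul_eq {K : Type*} [Field K] {A : Type*} [Ring A] [Algebra K A] {q l m : K}
    {ul um : A} (hql : q * l - m ≠ 0)
    (hrel : (l • ul - m • um) * (ul - um) = q • ((ul - um) * (l • ul - m • um))) :
    um * ul = coeffAtZero l m q • (ul * ul) + ((l - q * m) / (q * l - m)) • (ul * um)
      + coeffRatio l m q • (um * um) := by
  have hcleared : (q * l - m) • (um * ul)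
      = ((q - 1) * l) • (ul * ul) + (l - q * m) • (ul * um) + ((q - 1) * m) • (um * um) := by
    simp only [sub_mul, mul_sub, smul_mul_assoc, mul_smul_comm] at hrel
    linear_combination (norm := module) hrel
  rw [← inv_smul_smul₀ hql (um * ul), hcleared]
  simp only [smul_add, smul_smul, coeffAtZero, coeffRatio, div_eq_inv_mul]

end ULambdaMu

open ULambdaMu in
theorem statement14_general {K : Type*} [Field K] {A : Type*} [Ring A] [Algebra K A]
    (q l m : K) (hq : q ≠ 0)
    (hden : ∀ j : ℤ, q ^ j * l - m ≠ 0)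
    (ul um : A)
    (hrel : (l • ul - m • um) * (ul - um) = q • ((ul - um) * (l • ul - m • um))) :
    ∃ c : ℕ → ℕ → K,
      (∀ n : ℕ, um * ul ^ n =
        ∑ p ∈ Finset.HasAntidiagonal.antidiagonal (n + 1), c p.1 p.2 • (ul ^ p.1 * um ^ p.2)) ∧
      (∀ α : ℕ, c α 0 =
        (q ^ ((α : ℤ) - 1) - 1) * l / (q ^ ((α : ℤ) - 1) * l - m)) ∧
      (∀ α β : ℕ, β ≠ 0 → c α β =
        q ^ ((α : ℤ) - 1) *
          (∏ j ∈ Finset.Icc ((α : ℤ) + 1) ((α : ℤ) + (β : ℤ) - 1), (q ^ j - 1)) *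
          ((l - m) * (l - q * m) * m ^ ((β : ℤ) - 1)) /
          (∏ j ∈ Finset.Icc ((α : ℤ) - 1) ((α : ℤ) + (β : ℤ) - 1), (q ^ j * l - m))) := by
  refine ⟨reorderCoeff q l m, fun n => ?_, fun α => if_pos rfl, fun α β hβ => if_neg hβ⟩
  rw [Finset.Nat.sum_antidiagonal_eq_sum_range_succ_mk]
  exact um_mul_pow_eq_orderedSum (um_mul_ul_eq (mul_sub_ne_zero hden) hrel)
    (reorderCoeff_zero_one hq hden) (reorderCoeff_one_zero q l m)
    (one_sub_coeffRatio_mul_reorderCoeff_ne_zero hden) (reorderCoeff_recursion hq hden) n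

/-- reordering coefficients in `U_{λ,μ}`.  Writing `l = λ⁻¹`,
`m = μ⁻¹` in a field `K` where all denominators `q^j l - m` are nonzero, for the
elements `u_λ, u_μ` of a `K`-algebra satisfying the quadratic exchange relation,
there are scalars `c_{α,β}` with
`u_μ u_λ^n = ∑_{α+β=n+1} c_{α,β} u_λ^α u_μ^β`, given by the stated closed
formulas. -/
theorem statement14 {K : Type*} [Field K] {A : Type*} [Ring A] [Algebra K A]
    (q l m : K) (hq : q ≠ 0) (hl : l ≠ 0) (hm : m ≠ 0)
    (hden : ∀ j : ℤ, q ^ j * l - m ≠ 0)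
    (ul um : A)
    (hrel : (l • ul - m • um) * (ul - um) = q • ((ul - um) * (l • ul - m • um))) :
    ∃ c : ℕ → ℕ → K,
      (∀ n : ℕ, um * ul ^ n =
        ∑ p ∈ Finset.HasAntidiagonal.antidiagonal (n + 1), c p.1 p.2 • (ul ^ p.1 * um ^ p.2)) ∧
      (∀ α : ℕ, c α 0 =
        (q ^ ((α : ℤ) - 1) - 1) * l / (q ^ ((α : ℤ) - 1) * l - m)) ∧
      (∀ α β : ℕ, β ≠ 0 → c α β =
        q ^ ((α : ℤ) - 1) *
          (∏ j ∈ Finset.Icc ((α : ℤ) + 1) ((α : ℤ) + (β : ℤ) - 1), (q ^ j - 1)) *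
          ((l - m) * (l - q * m) * m ^ ((β : ℤ) - 1)) /
          (∏ j ∈ Finset.Icc ((α : ℤ) - 1) ((α : ℤ) + (β : ℤ) - 1), (q ^ j * l - m))) :=
  statement14_general q l m hq hden ul um hrel
end
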